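/- Uniqueness of the Shapley value for two-person games: any allocation rule φ that assigns to each two-person cost game c on players {A,B} a pair (φ_A(c), φ_B(c)) satisfying efficiency (φ_A + φ_B = c({A,B})), symmetry (c({A}) = c({B}) implies φ_A = φ_B), the dummy player property (if c({A,B}) − c({j}) = c({i}) then φ_i = c({i})), and additivity (φ(c + c') = φ(c) + φ(c')), must coincide with the Shapley rule φ_i(c) = ½·(c({A,B}) + c({i}) − c({j})) on all such games. -/

import Mathlib

/-!
Split a game `c` into its additive part `S ↦ ∑ k ∈ S, c {k}` and the surplus game that remains.
In the additive part every player is a dummy, so the rule pays each player their stand-alone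
cost; the surplus game vanishes on singletons, so symmetry and efficiency force an equal split
of its grand-coalition cost. Additivity adds the two allocations.
-/

open Finset

theorem Fin.univ_two_eq_pair {i j : Fin 2} (hij : i ≠ j) : (univ : Finset (Fin 2)) = {i, j} :=
  (eq_univ_of_card _ (card_pair hij)).symm

namespace TwoPersonGame

def additivePart (c : Finset (Fin 2) → ℝ) (S : Finset (Fin 2)) : ℝ :=
  ∑ k ∈ S, c {k}

def surplus (c : Finset (Fin 2) → ℝ) (S : Finset (Fin 2)) : ℝ :=
  c S - additivePart c S

variable (c : Finset (Fin 2) → ℝ)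

@[simp]
theorem additivePart_empty : additivePart c ∅ = 0 :=
  sum_empty

@[simp]
theorem additivePart_singleton (k : Fin 2) : additivePart c {k} = c {k} :=
  sum_singleton _ _

theorem additivePart_univ {i j : Fin 2} (hij : i ≠ j) :
    additivePart c univ = c {i} + c {j} := by
  rw [additivePart, Fin.univ_two_eq_pair hij, sum_pair hij]

theorem surplus_empty (hc : c ∅ = 0) : surplus c ∅ = 0 := by
  simp [surplus, hc]

@[simp]
theorem surplus_singleton (k : Fin 2) : surplus c {k} = 0 := by
  simp [surplus]

theorem surplus_univ {i j : Fin 2} (hij : i ≠ j) :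
    surplus c univ = c univ - c {i} - c {j} := by
  rw [surplus, additivePart_univ c hij]
  ring

theorem additivePart_add_surplus : (fun S => additivePart c S + surplus c S) = c := by
  funext S
  simp [surplus]

end TwoPersonGame

open TwoPersonGame

theorem alloc_eq_half_of_singleton_eq (φ : (Finset (Fin 2) → ℝ) → Fin 2 → ℝ)
    (heff : ∀ c : Finset (Fin 2) → ℝ, c ∅ = 0 → φ c 0 + φ c 1 = c univ)
    (hsym : ∀ c : Finset (Fin 2) → ℝ, c ∅ = 0 → c {0} = c {1} → φ c 0 = φ c 1)
    {c : Finset (Fin 2) → ℝ} (hc : c ∅ = 0) (hc01 : c {0} = c {1}) (i : Fin 2) :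
    φ c i = c univ / 2 := by
  have hsplit := heff c hc
  have hequal := hsym c hc hc01
  match i with
  | 0 | 1 => linarith

theorem alloc_additivePart (φ : (Finset (Fin 2) → ℝ) → Fin 2 → ℝ)
    (hdum : ∀ c : Finset (Fin 2) → ℝ, c ∅ = 0 → ∀ i j : Fin 2, i ≠ j →
      c univ - c {j} = c {i} → φ c i = c {i})
    (c : Finset (Fin 2) → ℝ) {i j : Fin 2} (hij : i ≠ j) :
    φ (additivePart c) i = c {i} := by
  have hdummy : additivePart c univ - additivePart c {j} = additivePart c {i} := by
    simp [additivePart_univ c hij]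
  simpa using hdum _ (additivePart_empty c) i j hij hdummy

/-- Uniqueness of the Shapley value for two-person cost games: any allocation rule
satisfying efficiency, symmetry, the dummy player property, and additivity coincides
with the Shapley rule. -/
theorem shapley_unique
    (φ : (Finset (Fin 2) → ℝ) → Fin 2 → ℝ)
    (heff : ∀ c : Finset (Fin 2) → ℝ, c ∅ = 0 → φ c 0 + φ c 1 = c Finset.univ)
    (hsym : ∀ c : Finset (Fin 2) → ℝ, c ∅ = 0 → c {0} = c {1} → φ c 0 = φ c 1)
    (hdum : ∀ c : Finset (Fin 2) → ℝ, c ∅ = 0 → ∀ i j : Fin 2, i ≠ j →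
      c Finset.univ - c {j} = c {i} → φ c i = c {i})
    (hadd : ∀ c c' : Finset (Fin 2) → ℝ, c ∅ = 0 → c' ∅ = 0 → ∀ i : Fin 2,
      φ (fun S => c S + c' S) i = φ c i + φ c' i) :
    ∀ c : Finset (Fin 2) → ℝ, c ∅ = 0 → ∀ i j : Fin 2, i ≠ j →
      φ c i = (1 / 2) * (c Finset.univ + c {i} - c {j}) := by
  intro c hc i j hij
  have hsplit : φ c i = φ (additivePart c) i + φ (surplus c) i := by
    simpa only [additivePart_add_surplus] using
      hadd _ _ (additivePart_empty c) (surplus_empty c hc) i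
  have hsurplus : φ (surplus c) i = (c univ - c {i} - c {j}) / 2 := by
    rw [alloc_eq_half_of_singleton_eq φ heff hsym (surplus_empty c hc) (by simp),
      surplus_univ c hij]
  rw [hsplit, alloc_additivePart φ hdum c hij, hsurplus]
  ring
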